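/- arXiv:math/0203204 — 5 statements merged into one kernel-verified Lean document; each statement's English description precedes it below -/
import Mathlib

section
/- Let M be a matrix for a propositional language (V(M) may be infinite) and let A₁, …, Aₙ be formulas, none of which is a tautology of M. Then there exists a finite-valued matrix M' for the same language such that: (1) none of A₁, …, Aₙ is a tautology of M'; (2) Taut(M) ⊆ Taut(M'); and (3) the number of truth values of M' is at most ∏ᵢ ξ(Aᵢ), where ξ(Aᵢ) is the number of subformulas of Aᵢ plus 1. -/
/-!
For each `Aᵢ` fix a valuation `Iᵢ` refuting it in `M`, and let `Sᵢ` be the set of values that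
`Iᵢ` gives to the subformulas of `Aᵢ`. Restricting `M` to `Sᵢ`, with one extra designated value
`none` absorbing every operation whose result leaves `Sᵢ`, yields a matrix with at most `ξ(Aᵢ)`
values. It still refutes `Aᵢ`, since every subformula keeps its value in `Sᵢ`, and it validates
every tautology of `M`, since a value other than `none` is an honest value of `M` under a
suitable valuation. The product of these `n` matrices does everything at once.
-/

/-- Formulas of a propositional language with connectives `C` of arities `ar`. -/
inductive Fml (C : Type) (ar : C → ℕ) : Type
  | var : ℕ → Fml C ar
  | app : (c : C) → (Fin (ar c) → Fml C ar) → Fml C ar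

/-- A matrix for the language: truth values, designated values, truth functions. -/
structure Mat (C : Type) (ar : C → ℕ) where
  V : Type
  desig : Set V
  interp : (c : C) → (Fin (ar c) → V) → V

variable {C : Type} {ar : C → ℕ}

/-- Extension of a valuation to all formulas. -/
def Mat.eval (M : Mat C ar) (I : ℕ → M.V) : Fml C ar → M.V
  | .var n => I n
  | .app c f => M.interp c fun i => M.eval I (f i)

/-- The set of tautologies of a matrix. -/
def Mat.Taut (M : Mat C ar) : Set (Fml C ar) :=
  {A | ∀ I : ℕ → M.V, M.eval I A ∈ M.desig}

/-- `Subf B A`: `B` is a subformula of `A`. -/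
inductive Subf : Fml C ar → Fml C ar → Prop
  | refl (A : Fml C ar) : Subf A A
  | app {B : Fml C ar} {c : C} {f : Fin (ar c) → Fml C ar} (i : Fin (ar c)) :
      Subf B (f i) → Subf B (.app c f)

/-- `ξ(A)` is the number of subformulas of `A`, plus 1. -/
noncomputable def xi (A : Fml C ar) : ℕ := {B | Subf B A}.ncard + 1

theorem finite_setOf_subf (A : Fml C ar) : {B | Subf B A}.Finite := by
  induction A with
  | var n =>
    refine (Set.finite_singleton (Fml.var n)).subset fun B hB => ?_
    cases hB
    rfl
  | app c f ih =>
    refine ((Set.finite_iUnion ih).insert (Fml.app c f)).subset fun B hB => ?_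
    cases hB with
    | refl => exact Set.mem_insert _ _
    | app i hi => exact Or.inr (Set.mem_iUnion.mpr ⟨i, hi⟩)

namespace Mat

def pi {ι : Type} (M : ι → Mat C ar) : Mat C ar where
  V := ∀ i, (M i).V
  desig := {v | ∀ i, v i ∈ (M i).desig}
  interp c g i := (M i).interp c fun j => g j i

theorem eval_pi {ι : Type} (M : ι → Mat C ar) (I : ℕ → (pi M).V) (B : Fml C ar) (i : ι) :
    (pi M).eval I B i = (M i).eval (fun k => I k i) B := by
  induction B with
  | var k => rfl
  | app c f ih => exact congrArg ((M i).interp c) (funext ih)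

theorem taut_pi {ι : Type} (M : ι → Mat C ar) [∀ i, Nonempty (M i).V] :
    (pi M).Taut = ⋂ i, (M i).Taut := by
  classical
  ext B
  simp only [Set.mem_iInter, Taut, Set.mem_ofPred_eq]
  constructor
  · intro hB i J
    have hJ := eval_pi M (fun k => Function.update (fun _ => Classical.arbitrary _) i (J k)) B i
    simp only [Function.update_self] at hJ
    exact hJ ▸ hB _ i
  · intro hB I i
    rw [eval_pi]
    exact hB i _

theorem card_pi {ι : Type} [Fintype ι] (M : ι → Mat C ar) :
    Nat.card (pi M).V = ∏ i, Nat.card (M i).V :=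
  Nat.card_pi

open Classical in
noncomputable def restrict (M : Mat C ar) (S : Set M.V) : Mat C ar where
  V := Option S
  desig := {v | ∀ x : S, v = some x → (x : M.V) ∈ M.desig}
  interp c g :=
    if hg : ∀ j, (g j).isSome then
      if hv : M.interp c (fun j => ((g j).get (hg j) : M.V)) ∈ S then
        some ⟨_, hv⟩
      else none
    else none

def subfValues (M : Mat C ar) (I : ℕ → M.V) (A : Fml C ar) : Set M.V :=
  M.eval I '' {B | Subf B A}

instance (M : Mat C ar) (I : ℕ → M.V) (A : Fml C ar) : Finite (M.subfValues I A) :=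
  ((finite_setOf_subf A).image _).to_subtype

variable (M : Mat C ar) (S : Set M.V)

instance : Nonempty (M.restrict S).V := ⟨none⟩

instance [Finite S] : Finite (M.restrict S).V := inferInstanceAs (Finite (Option S))

theorem interp_restrict_eq_some {c : C} {g : Fin (ar c) → (M.restrict S).V} {x : S}
    (hx : (M.restrict S).interp c g = some x) :
    ∃ v : Fin (ar c) → S, (∀ j, g j = some (v j)) ∧ (x : M.V) = M.interp c fun j => v j := by
  simp only [restrict] at hx
  split_ifs at hx with hg
  cases hx
  exact ⟨fun j => (g j).get (hg j), fun j => (Option.some_get _).symm, rfl⟩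

theorem interp_restrict_some {c : C} (v : Fin (ar c) → S) (hv : M.interp c (fun j => v j) ∈ S) :
    (M.restrict S).interp c (fun j => some (v j)) = some ⟨_, hv⟩ := by
  simp [restrict, hv]

theorem eq_eval_of_eval_restrict_eq_some (J : ℕ → (M.restrict S).V) (I₀ : ℕ → M.V)
    (B : Fml C ar) (x : S) (hx : (M.restrict S).eval J B = some x) :
    (x : M.V) = M.eval (fun k => ((J k).map Subtype.val).getD (I₀ k)) B := by
  induction B generalizing x with
  | var k =>
    change J k = some x at hx
    simp [eval, hx]
  | app c f ih =>
    obtain ⟨v, hv, hxv⟩ := interp_restrict_eq_some M S hx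
    exact hxv.trans (congrArg (M.interp c) (funext fun j => ih j _ (hv j)))

theorem taut_subset_taut_restrict : M.Taut ⊆ (M.restrict S).Taut := by
  intro B hB J x hx
  rw [eq_eval_of_eval_restrict_eq_some M S J (fun _ => x) B x hx]
  exact hB _

open Classical in
theorem eval_restrict_of_forall_subf_mem (I : ℕ → M.V) (B : Fml C ar)
    (hS : ∀ D, Subf D B → M.eval I D ∈ S) :
    (M.restrict S).eval (fun k => if h : I k ∈ S then some ⟨I k, h⟩ else none) B =
      some ⟨M.eval I B, hS B (.refl B)⟩ := by
  induction B with
  | var k => exact dif_pos _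
  | app c f ih =>
    have hf j := ih j fun D hD => hS D (.app j hD)
    exact (congrArg _ (funext hf)).trans (interp_restrict_some M S _ _)

theorem notMem_taut_restrict_subfValues (I : ℕ → M.V) (A : Fml C ar)
    (hA : M.eval I A ∉ M.desig) : A ∉ (M.restrict (M.subfValues I A)).Taut := fun hTaut =>
  hA (hTaut _ _ (eval_restrict_of_forall_subf_mem M (M.subfValues I A) I A
    fun D hD => ⟨D, hD, rfl⟩))

theorem card_restrict_subfValues_le_xi (I : ℕ → M.V) (A : Fml C ar) :
    Nat.card (M.restrict (M.subfValues I A)).V ≤ xi A := by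
  change Nat.card (Option _) ≤ _
  rw [Finite.card_option, Nat.card_coe_set_eq]
  exact Nat.add_le_add_right (Set.ncard_image_le (finite_setOf_subf A)) 1

end Mat

theorem exists_finite_refuting_cover_general (M : Mat C ar) (n : ℕ)
    (A : Fin n → Fml C ar) (h : ∀ i, A i ∉ M.Taut) :
    ∃ M' : Mat C ar, Finite M'.V ∧ (∀ i, A i ∉ M'.Taut) ∧ M.Taut ⊆ M'.Taut ∧
      Nat.card M'.V ≤ ∏ i, xi (A i) := by
  choose I hI using fun i => not_forall.mp (h i)
  refine ⟨Mat.pi fun i => M.restrict (M.subfValues (I i) (A i)), Pi.finite, fun i hi => ?_, ?_, ?_⟩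
  · rw [Mat.taut_pi, Set.mem_iInter] at hi
    exact Mat.notMem_taut_restrict_subfValues M (I i) (A i) (hI i) (hi i)
  · rw [Mat.taut_pi]
    exact Set.subset_iInter fun i => Mat.taut_subset_taut_restrict M _
  · rw [Mat.card_pi]
    exact Finset.prod_le_prod' fun i _ => Mat.card_restrict_subfValues_le_xi M (I i) (A i)

/-- Proposition 2.13: if `A₁, …, Aₙ` are not tautologies of `M`, there is a
finite-valued matrix `M'` in which none of them is a tautology, with
`Taut(M) ⊆ Taut(M')` and at most `∏ᵢ ξ(Aᵢ)` truth values. -/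
theorem exists_finite_refuting_cover [Fintype C] (M : Mat C ar) (n : ℕ)
    (A : Fin n → Fml C ar) (h : ∀ i, A i ∉ M.Taut) :
    ∃ M' : Mat C ar, Finite M'.V ∧ (∀ i, A i ∉ M'.Taut) ∧ M.Taut ⊆ M'.Taut ∧
      Nat.card M'.V ≤ ∏ i, xi (A i) :=
  exists_finite_refuting_cover_general M n A h
end

section
/- A Hilbert calculus C is strongly sound for a matrix M if and only if Thm(C') ⊆ Taut(M') for every matrix M' and calculus C', where M' is obtained from M by adding truth tables for new connectives (i.e., M' is a matrix over an extended language, with the same truth values and designated values, agreeing with M on the connectives of the original language) and C' is obtained from C by adding arbitrary tautologies of M' as new axioms. -/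
variable {C : Type} {ar : C → ℕ}

/-- Substitution of formulas for variables. -/
def subst (σ : ℕ → Fml C ar) : Fml C ar → Fml C ar
  | .var n => σ n
  | .app c f => .app c fun i => subst σ (f i)

/-- A Hilbert calculus: finitely many axioms and rules (premises, conclusion). -/
structure Calc (C : Type) (ar : C → ℕ) where
  axioms : List (Fml C ar)
  rules : List (List (Fml C ar) × Fml C ar)

/-- Theorems of a Hilbert calculus. -/
inductive Thm (K : Calc C ar) : Fml C ar → Prop
  | ax {A : Fml C ar} (σ : ℕ → Fml C ar) : A ∈ K.axioms → Thm K (subst σ A)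
  | rule {r : List (Fml C ar) × Fml C ar} (σ : ℕ → Fml C ar) :
      r ∈ K.rules → (∀ B ∈ r.1, Thm K (subst σ B)) → Thm K (subst σ r.2)

/-- `M` is normal for `K` (`K` is strongly sound for `M`; `M` is a cover of `K`). -/
def NormalFor (M : Mat C ar) (K : Calc C ar) : Prop :=
  (∀ A ∈ K.axioms, A ∈ M.Taut) ∧
  ∀ r ∈ K.rules, ∀ I : ℕ → M.V,
    (∀ B ∈ r.1, M.eval I B ∈ M.desig) → M.eval I r.2 ∈ M.desig

/-- Embedding of formulas of the original language into the language extended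
by new connectives `D` (with arities `arD`). -/
def injFml {D : Type} {arD : D → ℕ} : Fml C ar → Fml (C ⊕ D) (Sum.elim ar arD)
  | .var n => .var n
  | .app c f => .app (Sum.inl c) fun i => injFml (f i)

/-- The matrix `M'` obtained from `M` by adding truth tables `g` for the new
connectives `D`: same truth values, same designated values, and the truth
functions agree with those of `M` on the old connectives. -/
def extMat {D : Type} {arD : D → ℕ} (M : Mat C ar)
    (g : (d : D) → (Fin (arD d) → M.V) → M.V) : Mat (C ⊕ D) (Sum.elim ar arD) where
  V := M.V
  desig := M.desig
  interp := fun c => match c with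
    | .inl c => M.interp c
    | .inr d => g d

/-- The calculus `C'` obtained from `K` by adding the formulas in `L`
(of the extended language) as new axioms. -/
def extCalc {D : Type} {arD : D → ℕ} (K : Calc C ar)
    (L : List (Fml (C ⊕ D) (Sum.elim ar arD))) : Calc (C ⊕ D) (Sum.elim ar arD) where
  axioms := K.axioms.map injFml ++ L
  rules := K.rules.map fun r => (r.1.map injFml, injFml r.2)

/-!
A strongly sound calculus is sound, and strong soundness survives adding truth tables for new
connectives and tautologies as axioms, because an old formula is evaluated by old truth tables
only. Conversely, given a valuation `I`, add a nullary connective `n` interpreted as `I n` for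
every variable `n`. Substituting these constants into a rule turns its premises into formulas
that are tautologies exactly when they are designated under `I`; adding them as axioms makes the
corresponding instance of the conclusion a theorem, hence a tautology, hence designated under `I`.
-/

theorem subst_var (A : Fml C ar) : subst Fml.var A = A := by
  induction A with
  | var n => rfl
  | app c f ih => exact congrArg _ (funext ih)

theorem Mat.eval_subst (M : Mat C ar) (I : ℕ → M.V) (σ : ℕ → Fml C ar) (A : Fml C ar) :
    M.eval I (subst σ A) = M.eval (fun n => M.eval I (σ n)) A := by
  induction A with
  | var n => rfl
  | app c f ih => exact congrArg _ (funext ih)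

theorem Thm.of_mem_axioms {K : Calc C ar} {A : Fml C ar} (h : A ∈ K.axioms) : Thm K A := by
  simpa only [subst_var] using Thm.ax Fml.var h

theorem NormalFor.thm_mem_taut {M : Mat C ar} {K : Calc C ar} (h : NormalFor M K)
    {F : Fml C ar} (hF : Thm K F) : F ∈ M.Taut := by
  induction hF with
  | ax σ hA =>
    intro I
    rw [Mat.eval_subst]
    exact h.1 _ hA _
  | rule σ hr _ ih =>
    intro I
    rw [Mat.eval_subst]
    refine h.2 _ hr _ fun B hB => ?_
    rw [← Mat.eval_subst]
    exact ih B hB I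

section Extension

variable {D : Type} {arD : D → ℕ}

theorem extMat_eval_injFml (M : Mat C ar) (g : (d : D) → (Fin (arD d) → M.V) → M.V)
    (I : ℕ → (extMat M g).V) (A : Fml C ar) : (extMat M g).eval I (injFml A) = M.eval I A := by
  induction A with
  | var n => rfl
  | app c f ih => exact congrArg _ (funext ih)

theorem NormalFor.extCalc {M : Mat C ar} {K : Calc C ar}
    {g : (d : D) → (Fin (arD d) → M.V) → M.V} {L : List (Fml (C ⊕ D) (Sum.elim ar arD))}
    (h : NormalFor M K) (hL : ∀ A ∈ L, A ∈ (extMat M g).Taut) :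
    NormalFor (extMat M g) (extCalc K L) := by
  constructor
  · intro A hA
    rcases List.mem_append.mp hA with hA | hA
    · obtain ⟨A₀, hA₀, rfl⟩ := List.mem_map.mp hA
      intro I
      rw [extMat_eval_injFml]
      exact h.1 A₀ hA₀ I
    · exact hL A hA
  · intro r' hr' I hprem
    obtain ⟨r, hr, rfl⟩ := List.mem_map.mp hr'
    rw [extMat_eval_injFml]
    refine h.2 r hr I fun B hB => ?_
    have hB' := hprem (injFml B) (List.mem_map_of_mem hB)
    rwa [extMat_eval_injFml] at hB'

end Extension

section Constants

/-- The new connective `n` is a constant; interpreted by `fun n _ => I n` it names `I n`. -/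
def valConst (n : ℕ) : Fml (C ⊕ ℕ) (Sum.elim ar fun _ => 0) :=
  .app (Sum.inr n) Fin.elim0

theorem extMat_eval_subst_valConst (M : Mat C ar) (I : ℕ → M.V)
    (J : ℕ → (extMat M fun n (_ : Fin 0 → M.V) => I n).V) (A : Fml C ar) :
    (extMat M fun n (_ : Fin 0 → M.V) => I n).eval J (subst valConst (injFml A)) =
      M.eval I A := by
  rw [Mat.eval_subst]
  exact extMat_eval_injFml M _ I A

theorem normalFor_of_forall_valConst {M : Mat C ar} {K : Calc C ar}
    (h : ∀ (I : ℕ → M.V) (L : List (Fml (C ⊕ ℕ) (Sum.elim ar fun _ => 0))),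
      (∀ A ∈ L, A ∈ (extMat M fun n (_ : Fin 0 → M.V) => I n).Taut) →
      ∀ F, Thm (extCalc K L) F → F ∈ (extMat M fun n (_ : Fin 0 → M.V) => I n).Taut) :
    NormalFor M K := by
  constructor
  · intro A hA I
    have hthm : Thm (extCalc K []) (subst valConst (injFml A)) :=
      Thm.ax valConst (List.mem_append_left _ (List.mem_map_of_mem hA))
    have hA' := h I [] (by simp) _ hthm I
    rwa [extMat_eval_subst_valConst M I I A] at hA'
  · intro r hr I hprem
    let L := r.1.map fun B => subst valConst (injFml B)
    have hL : ∀ A ∈ L, A ∈ (extMat M fun n (_ : Fin 0 → M.V) => I n).Taut := by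
      intro A hA J
      obtain ⟨B, hB, rfl⟩ := List.mem_map.mp hA
      rw [extMat_eval_subst_valConst]
      exact hprem B hB
    have hthm : Thm (extCalc K L) (subst valConst (injFml r.2)) := by
      refine Thm.rule (r := (r.1.map injFml, injFml r.2)) valConst
        (List.mem_map_of_mem hr) fun B' hB' => ?_
      obtain ⟨B, hB, rfl⟩ := List.mem_map.mp hB'
      exact Thm.of_mem_axioms (List.mem_append_right _ (List.mem_map_of_mem hB))
    have hconcl := h I L hL _ hthm I
    rwa [extMat_eval_subst_valConst M I I r.2] at hconcl

end Constants

/-- Proposition 3.2: `K` is strongly sound for `M` iff `Thm(C') ⊆ Taut(M')`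
for every matrix `M'` obtained from `M` by adding truth tables for new
connectives and every calculus `C'` obtained from `K` by adding tautologies
of `M'` as new axioms. -/
theorem stronglySound_iff (M : Mat C ar) (K : Calc C ar) :
    NormalFor M K ↔
      ∀ (D : Type) (arD : D → ℕ) (g : (d : D) → (Fin (arD d) → M.V) → M.V)
        (L : List (Fml (C ⊕ D) (Sum.elim ar arD))),
        (∀ A ∈ L, A ∈ (extMat M g).Taut) →
        ∀ F, Thm (extCalc K L) F → F ∈ (extMat M g).Taut :=
  ⟨fun h _ _ _ _ hL _ hF => (h.extCalc hL).thm_mem_taut hF,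
    fun h => normalFor_of_forall_valConst fun I => h ℕ _ fun n _ => I n⟩
end

section
/- Let M₁ and M₂ be finite-valued matrices for the same propositional language with m₁ and m₂ truth values respectively, and let m = max(m₁, m₂). If there exists a formula A such that M₂ ⊨ A but M₁ ⊭ A, then there exists such a formula A* that contains at most m distinct propositional variables and whose depth is less than m^(m^m + 1). -/
variable {C : Type} {ar : C → ℕ}

/-- The set of propositional variables occurring in a formula. -/
def fvars : Fml C ar → Finset ℕ
  | .var n => {n}
  | .app _ f => Finset.univ.sup fun i => fvars (f i)

/-- The depth (maximal nesting of connectives) of a formula. -/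
def depth : Fml C ar → ℕ
  | .var _ => 0
  | .app _ f => 1 + Finset.univ.sup fun i => depth (f i)

namespace SepAux

/-- substitution of variables for variables -/
def subst (σ : ℕ → ℕ) : Fml C ar → Fml C ar
  | .var n => .var (σ n)
  | .app c f => .app c fun i => subst σ (f i)

/-- number of connective occurrences -/
def size : Fml C ar → ℕ
  | .var _ => 0
  | .app _ f => 1 + ∑ i, size (f i)

theorem eval_subst (M : Mat C ar) (I : ℕ → M.V) (σ : ℕ → ℕ) :
    ∀ A : Fml C ar, M.eval I (subst σ A) = M.eval (fun n => I (σ n)) A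
  | .var n => rfl
  | .app c f => by
      show M.interp c (fun i => M.eval I (subst σ (f i))) = _
      show _ = M.interp c fun i => M.eval (fun n => I (σ n)) (f i)
      exact congrArg _ (funext fun i => eval_subst M I σ (f i))

theorem fvars_subst_subset (σ : ℕ → ℕ) (m : ℕ) (hσ : ∀ n, σ n < m) :
    ∀ A : Fml C ar, fvars (subst σ A) ⊆ Finset.range m
  | .var n => by
      simp only [subst, fvars, Finset.singleton_subset_iff, Finset.mem_range]
      exact hσ n
  | .app c f => by
      show Finset.univ.sup (fun i => fvars (subst σ (f i))) ⊆ _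
      exact Finset.sup_le fun i _ => fvars_subst_subset σ m hσ (f i)

theorem eval_congr (M : Mat C ar) (I I' : ℕ → M.V) :
    ∀ A : Fml C ar, (∀ n ∈ fvars A, I n = I' n) → M.eval I A = M.eval I' A
  | .var n => fun h => h n (by simp [fvars])
  | .app c f => fun h => by
      show M.interp c _ = M.interp c _
      refine congrArg _ (funext fun i => eval_congr M I I' (f i) fun n hn => ?_)
      refine h n (Finset.mem_of_subset ?_ hn)
      exact Finset.le_sup (f := fun i => fvars (f i)) (Finset.mem_univ i)

theorem size_child_lt (c : C) (f : Fin (ar c) → Fml C ar) (i : Fin (ar c)) :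
    size (f i) < size (.app c f) := by
  have : size (f i) ≤ ∑ j, size (f j) :=
    Finset.single_le_sum (f := fun j => size (f j)) (fun j _ => Nat.zero_le _) (Finset.mem_univ i)
  show size (f i) < 1 + ∑ j, size (f j)
  omega

theorem fvars_child_subset (c : C) (f : Fin (ar c) → Fml C ar) (i : Fin (ar c)) :
    fvars (f i) ⊆ fvars (.app c f) :=
  Finset.le_sup (f := fun i => fvars (f i)) (Finset.mem_univ i)


section Profile

variable (M₁ M₂ : Mat C ar) {m : ℕ} (hm : 0 < m) (I₁ : ℕ → M₁.V)

/-- extend a finite valuation to all variables -/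
def ext2 (J : Fin m → M₂.V) : ℕ → M₂.V := fun k => J ⟨k % m, Nat.mod_lt k hm⟩

/-- profile of a formula: value in M₁ under I₁, and M₂-truth-function on m variables -/
def prof (A : Fml C ar) : M₁.V × ((Fin m → M₂.V) → M₂.V) :=
  (M₁.eval I₁ A, fun J => M₂.eval (ext2 M₂ hm J) A)

theorem prof_app_congr (c : C) (f g : Fin (ar c) → Fml C ar)
    (h : ∀ i, prof M₁ M₂ hm I₁ (g i) = prof M₁ M₂ hm I₁ (f i)) :
    prof M₁ M₂ hm I₁ (.app c g) = prof M₁ M₂ hm I₁ (.app c f) := by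
  unfold prof at *
  refine Prod.ext ?_ ?_
  · show M₁.interp c (fun i => M₁.eval I₁ (g i)) = M₁.interp c (fun i => M₁.eval I₁ (f i))
    exact congrArg _ (funext fun i => congrArg Prod.fst (h i))
  · refine funext fun J => ?_
    show M₂.interp c (fun i => M₂.eval (ext2 M₂ hm J) (g i))
       = M₂.interp c (fun i => M₂.eval (ext2 M₂ hm J) (f i))
    exact congrArg _ (funext fun i => congr_fun (congrArg Prod.snd (h i)) J)

theorem reduce [Finite M₁.V] [Finite M₂.V] :
    ∀ (A : Fml C ar) (S : Finset (M₁.V × ((Fin m → M₂.V) → M₂.V))),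
      prof M₁ M₂ hm I₁ (.var 0) ∉ S →
      Nat.card (M₁.V × ((Fin m → M₂.V) → M₂.V)) ≤ S.card + depth A →
      (∃ B, prof M₁ M₂ hm I₁ B ∈ S ∧ size B ≤ size A ∧ fvars B ⊆ fvars A ∪ {0}) ∨
      (∃ B, prof M₁ M₂ hm I₁ B = prof M₁ M₂ hm I₁ A ∧ size B < size A ∧
        fvars B ⊆ fvars A ∪ {0}) := by
  classical
  letI : Fintype (M₁.V × ((Fin m → M₂.V) → M₂.V)) := Fintype.ofFinite _
  have hcard : Nat.card (M₁.V × ((Fin m → M₂.V) → M₂.V))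
      = Fintype.card (M₁.V × ((Fin m → M₂.V) → M₂.V)) := Nat.card_eq_fintype_card
  intro A
  induction A with
  | var n =>
    intro S hvar hK
    by_cases hS : prof M₁ M₂ hm I₁ (.var n) ∈ S
    · exact Or.inl ⟨.var n, hS, le_rfl, Finset.subset_union_left⟩
    · exfalso
      have hne : S ≠ Finset.univ := fun h => hvar (h ▸ Finset.mem_univ _)
      have : S.card < Fintype.card (M₁.V × ((Fin m → M₂.V) → M₂.V)) :=
        lt_of_le_of_ne (Finset.card_le_univ S)
          (fun h => hne (Finset.eq_univ_of_card S (by simpa using h)))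
      simp only [depth] at hK
      omega
  | app c f ih =>
    intro S hvar hK
    by_cases h0 : prof M₁ M₂ hm I₁ (.app c f) = prof M₁ M₂ hm I₁ (.var 0)
    · refine Or.inr ⟨.var 0, h0.symm, ?_, by simp [fvars]⟩
      show size (Fml.var 0) < size (Fml.app c f)
      show 0 < 1 + ∑ i, size (f i)
      omega
    by_cases hS : prof M₁ M₂ hm I₁ (.app c f) ∈ S
    · exact Or.inl ⟨.app c f, hS, le_rfl, Finset.subset_union_left⟩
    set S' : Finset (M₁.V × ((Fin m → M₂.V) → M₂.V)) :=
      insert (prof M₁ M₂ hm I₁ (.app c f)) S with hS'def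
    have hvar' : prof M₁ M₂ hm I₁ (.var 0) ∉ S' := by
      simp only [hS'def, Finset.mem_insert]
      push_neg
      exact ⟨fun h => h0 h.symm, hvar⟩
    have hcardS' : S'.card = S.card + 1 := Finset.card_insert_of_notMem hS
    rcases Nat.eq_zero_or_pos (ar c) with har | har
    · exfalso
      have hd : depth (Fml.app c f) = 1 := by
        haveI : IsEmpty (Fin (ar c)) := ⟨fun i => absurd i.2 (by omega)⟩
        show 1 + Finset.univ.sup (fun i => depth (f i)) = 1
        simp
      have hle : S'.card ≤ Fintype.card (M₁.V × ((Fin m → M₂.V) → M₂.V)) :=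
        Finset.card_le_univ S'
      have : S' = Finset.univ := Finset.eq_univ_of_card S' (by omega)
      exact hvar' (this ▸ Finset.mem_univ _)
    · haveI : Nonempty (Fin (ar c)) := ⟨⟨0, har⟩⟩
      obtain ⟨i, -, hi⟩ := Finset.exists_mem_eq_sup Finset.univ Finset.univ_nonempty
        (fun i => depth (f i))
      have hdA : depth (Fml.app c f) = 1 + depth (f i) := by
        show 1 + Finset.univ.sup (fun i => depth (f i)) = _
        omega
      have hK' : Nat.card (M₁.V × ((Fin m → M₂.V) → M₂.V)) ≤ S'.card + depth (f i) := by
        omega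
      rcases ih i S' hvar' hK' with ⟨B, hBS', hBsz, hBfv⟩ | ⟨B, hBp, hBsz, hBfv⟩
      · have hsub : fvars B ⊆ fvars (Fml.app c f) ∪ {0} :=
          hBfv.trans (Finset.union_subset_union (fvars_child_subset c f i) le_rfl)
        rcases Finset.mem_insert.mp hBS' with hB | hB
        · exact Or.inr ⟨B, hB, lt_of_le_of_lt hBsz (size_child_lt c f i), hsub⟩
        · exact Or.inl ⟨B, hB, le_of_lt (lt_of_le_of_lt hBsz (size_child_lt c f i)), hsub⟩
      · refine Or.inr ⟨.app c (Function.update f i B), ?_, ?_, ?_⟩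
        · refine prof_app_congr M₁ M₂ hm I₁ c f _ fun j => ?_
          rcases eq_or_ne j i with rfl | hj
          · simpa using hBp
          · simp [Function.update_of_ne hj]
        · show 1 + ∑ j, size (Function.update f i B j) < 1 + ∑ j, size (f j)
          have heq : (fun j => size (Function.update f i B j))
              = Function.update (fun j => size (f j)) i (size B) := by
            funext j
            rcases eq_or_ne j i with rfl | hj
            · simp
            · simp [Function.update_of_ne hj]
          have h1 : ∑ j, size (Function.update f i B j)
              = size B + ∑ j ∈ Finset.univ \ {i}, size (f j) := by
            rw [heq, Finset.sum_update_of_mem (Finset.mem_univ i)]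
          have h2 : ∑ j, size (f j) = size (f i) + ∑ j ∈ Finset.univ \ {i}, size (f j) := by
            conv_lhs => rw [← Function.update_eq_self i (fun j => size (f j))]
            rw [Finset.sum_update_of_mem (Finset.mem_univ i)]
          omega
        · show Finset.univ.sup (fun j => fvars (Function.update f i B j))
              ⊆ fvars (Fml.app c f) ∪ {0}
          refine Finset.sup_le (f := fun j => fvars (Function.update f i B j))
            (fun j _ => ?_)
          rcases eq_or_ne j i with rfl | hj
          · show fvars (Function.update f j B j) ≤ _
            rw [Function.update_self]
            exact hBfv.trans (Finset.union_subset_union (fvars_child_subset c f j) le_rfl)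
          · show fvars (Function.update f i B j) ≤ _
            rw [Function.update_of_ne hj]
            exact (fvars_child_subset c f j).trans Finset.subset_union_left

end Profile

end SepAux


open SepAux

/-- From the proof of Theorem 4.2: if some formula is a tautology of `M₂` but
not of `M₁`, then there is such a formula with at most `m = max(m₁, m₂)`
distinct variables and depth less than `m ^ (m ^ m + 1)`. -/
theorem exists_small_separating_formula [Fintype C] (M₁ M₂ : Mat C ar)
    [Finite M₁.V] [Finite M₂.V]
    (h : ∃ A : Fml C ar, A ∈ M₂.Taut ∧ A ∉ M₁.Taut) :
    ∃ A : Fml C ar, A ∈ M₂.Taut ∧ A ∉ M₁.Taut ∧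
      (fvars A).card ≤ max (Nat.card M₁.V) (Nat.card M₂.V) ∧
      depth A < (max (Nat.card M₁.V) (Nat.card M₂.V)) ^
        ((max (Nat.card M₁.V) (Nat.card M₂.V)) ^
          (max (Nat.card M₁.V) (Nat.card M₂.V)) + 1) := by
  classical
  obtain ⟨A₀, hA₀₂, hA₀₁⟩ := h
  set m₁ := Nat.card M₁.V with hm₁def
  set m₂ := Nat.card M₂.V with hm₂def
  set m := max m₁ m₂ with hmdef
  -- a falsifying valuation for A₀ in M₁
  have hex₀ : ∃ I : ℕ → M₁.V, M₁.eval I A₀ ∉ M₁.desig := by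
    by_contra h'
    push_neg at h'
    exact hA₀₁ h'
  obtain ⟨I₀, hI₀⟩ := hex₀
  haveI : Nonempty M₁.V := ⟨I₀ 0⟩
  have hm₁ : 0 < m₁ := Nat.card_pos
  have hm : 0 < m := lt_of_lt_of_le hm₁ (le_max_left _ _)
  haveI : Fintype M₁.V := Fintype.ofFinite _
  have hcard₁ : Fintype.card M₁.V = m₁ := Nat.card_eq_fintype_card.symm
  let e : M₁.V ≃ Fin m₁ := (Fintype.equivFin M₁.V).trans (finCongr hcard₁)
  -- variable reduction: substitute variables to get fvars ⊆ range m
  let σ : ℕ → ℕ := fun n => (e (I₀ n)).val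
  have hσ : ∀ n, σ n < m := fun n => lt_of_lt_of_le (e (I₀ n)).2 (le_max_left _ _)
  let A₁ : Fml C ar := subst σ A₀
  have hA₁₂ : A₁ ∈ M₂.Taut := fun I => by
    show M₂.eval I (subst σ A₀) ∈ M₂.desig
    rw [eval_subst]
    exact hA₀₂ _
  have hA₁₁ : A₁ ∉ M₁.Taut := by
    intro hT
    apply hI₀
    have := hT (fun k => e.symm ⟨k % m₁, Nat.mod_lt k hm₁⟩)
    rw [show (A₁ : Fml C ar) = subst σ A₀ from rfl, eval_subst] at this
    convert this using 2
    funext n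
    show I₀ n = e.symm ⟨(e (I₀ n)).val % m₁, _⟩
    have : (⟨(e (I₀ n)).val % m₁, Nat.mod_lt _ hm₁⟩ : Fin m₁) = e (I₀ n) := by
      apply Fin.ext
      exact Nat.mod_eq_of_lt (e (I₀ n)).2
    rw [this, Equiv.symm_apply_apply]
  have hA₁fv : fvars A₁ ⊆ Finset.range m := fvars_subst_subset σ m hσ A₀
  -- pick a size-minimal formula with the three properties
  set P : Fml C ar → Prop := fun A =>
    A ∈ M₂.Taut ∧ A ∉ M₁.Taut ∧ fvars A ⊆ Finset.range m with hPdef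
  have hexn : ∃ n, ∃ A, P A ∧ size A = n := ⟨size A₁, A₁, ⟨hA₁₂, hA₁₁, hA₁fv⟩, rfl⟩
  obtain ⟨A, hPA, hszA⟩ := Nat.find_spec hexn
  have hmin : ∀ B, P B → Nat.find hexn ≤ size B :=
    fun B hB => Nat.find_min' hexn ⟨B, hB, rfl⟩
  obtain ⟨hA2, hA1, hAfv⟩ := hPA
  refine ⟨A, hA2, hA1, ?_, ?_⟩
  · calc (fvars A).card ≤ (Finset.range m).card := Finset.card_le_card hAfv
      _ = m := Finset.card_range m
  · -- depth bound
    by_contra hdep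
    push_neg at hdep
    -- the profile cardinality K
    set K := Nat.card (M₁.V × ((Fin m → M₂.V) → M₂.V)) with hKdef
    have hKN : K ≤ m ^ (m ^ m + 1) := by
      haveI : Fintype M₂.V := Fintype.ofFinite _
      have hcard₂ : Fintype.card M₂.V = m₂ := Nat.card_eq_fintype_card.symm
      have : K = m₁ * m₂ ^ (m₂ ^ m) := by
        rw [hKdef, Nat.card_eq_fintype_card, Fintype.card_prod, Fintype.card_fun,
          Fintype.card_fun, Fintype.card_fin, hcard₁, hcard₂]
      rw [this, pow_succ, mul_comm (m ^ (m ^ m)) m]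
      have h2 : m₂ ^ (m₂ ^ m) ≤ m ^ (m ^ m) := by
        calc m₂ ^ (m₂ ^ m) ≤ m ^ (m₂ ^ m) :=
              Nat.pow_le_pow_left (le_max_right _ _) _
          _ ≤ m ^ (m ^ m) :=
              Nat.pow_le_pow_right hm (Nat.pow_le_pow_left (le_max_right _ _) _)
      exact Nat.mul_le_mul (le_max_left _ _) h2
    -- a falsifying valuation for A in M₁
    have hexI : ∃ I : ℕ → M₁.V, M₁.eval I A ∉ M₁.desig := by
      by_contra h'
      push_neg at h'
      exact hA1 h'
    obtain ⟨I₁, hI₁⟩ := hexI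
    have hred := reduce M₁ M₂ hm I₁ A ∅ (Finset.notMem_empty _)
      (by simp only [Finset.card_empty, Nat.zero_add]; exact le_trans hKN hdep)
    rcases hred with ⟨B, hB, -, -⟩ | ⟨B, hBp, hBsz, hBfv⟩
    · exact absurd hB (Finset.notMem_empty _)
    · have hBfv' : fvars B ⊆ Finset.range m := by
        refine hBfv.trans (Finset.union_subset hAfv ?_)
        simpa using hm
      have hPB : P B := by
        refine ⟨?_, ?_, hBfv'⟩
        · -- B is a tautology of M₂
          intro I
          set J : Fin m → M₂.V := fun j => I j.val with hJdef
          have key : ∀ D : Fml C ar, fvars D ⊆ Finset.range m →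
              M₂.eval I D = M₂.eval (ext2 M₂ hm J) D := by
            intro D hD
            refine eval_congr M₂ I _ D fun n hn => ?_
            have hnm : n < m := Finset.mem_range.mp (hD hn)
            show I n = J ⟨n % m, _⟩
            rw [hJdef]
            simp [Nat.mod_eq_of_lt hnm]
          have heval : M₂.eval I B = M₂.eval I A :=
            calc M₂.eval I B = M₂.eval (ext2 M₂ hm J) B := key B hBfv'
              _ = (prof M₁ M₂ hm I₁ B).2 J := rfl
              _ = (prof M₁ M₂ hm I₁ A).2 J := by rw [hBp]
              _ = M₂.eval (ext2 M₂ hm J) A := rfl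
              _ = M₂.eval I A := (key A hAfv).symm
          rw [show M₂.eval I B = M₂.eval I A from heval]
          exact hA2 I
        · -- B is not a tautology of M₁
          intro hT
          apply hI₁
          have : M₁.eval I₁ B = M₁.eval I₁ A := congrArg Prod.fst hBp
          rw [← this]
          exact hT I₁
      have := hmin B hPB
      omega
end

section
/- Given two finite-valued matrices M₁ and M₂ for the same propositional language (with finite sets of truth values, decidable designated sets, and computable truth functions), it is decidable whether Taut(M₁) ⊆ Taut(M₂); consequently, it is decidable whether Taut(M₁) = Taut(M₂) and whether M₁ is better than M₂ (i.e., Taut(M₁) ⊊ Taut(M₂)). -/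
variable {C : Type} {ar : C → ℕ}

/-- A numerical encoding of the designated values of an `(m+1)`-valued matrix. -/
def encDes (m : ℕ) (des : Fin (m + 1) → Bool) : ℕ :=
  Encodable.encode (List.ofFn fun i => des i)

/-- A numerical encoding of the truth functions of an `(m+1)`-valued matrix:
for each connective, the full truth table. -/
noncomputable def encInterp [Fintype C] [Encodable C] (m : ℕ)
    (intp : (c : C) → (Fin (ar c) → Fin (m + 1)) → Fin (m + 1)) : ℕ :=
  Encodable.encode ((Finset.univ : Finset C).toList.map fun c =>
    Nat.pair (Encodable.encode c)
      (Encodable.encode (List.ofFn fun j : Fin ((m + 1) ^ ar c) =>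
        (intp c fun i =>
          (⟨j.val / (m + 1) ^ i.val % (m + 1),
            Nat.mod_lt _ (Nat.succ_pos m)⟩ : Fin (m + 1))).val)))

/-- A numerical encoding of an `(m+1)`-valued matrix. -/
noncomputable def encMat [Fintype C] [Encodable C] (m : ℕ)
    (des : Fin (m + 1) → Bool)
    (intp : (c : C) → (Fin (ar c) → Fin (m + 1)) → Fin (m + 1)) : ℕ :=
  Nat.pair m (Nat.pair (encDes m des) (encInterp m intp))

/-!
Let `σ : ℕ → V₂` be onto the values of `M₂`. Renaming variables through a right inverse of `σ`
shows that `Taut M₁ ⊆ Taut M₂` fails iff some formula `A` is designated in `M₁` under every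
valuation `t ∘ σ` but not in `M₂` under `σ`. The pair `(t ↦ A(t ∘ σ), A(σ))` is the value of `A`
in the finite matrix `M₁ ^ (V₂ → V₁) × M₂` (`Mat.witness`) under a generic valuation, so the
inclusion holds iff every element of the subalgebra generated by the finitely many generic values
is designated there. Closing the generators under the truth functions saturates within as many
rounds as that product has elements, so the subalgebra, and with it the answer, is computed by a
primitive recursive procedure on codes. Equality and strict inclusion follow by deciding the
inclusion in both directions.
-/

open Function

theorem Finset.exists_succ_subset_of_card_le {β : Type*} {s : ℕ → Finset β} {N : ℕ}
    (hs : ∀ i, s i ⊆ s (i + 1)) (hcard : ∀ i, (s i).card ≤ N) :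
    ∃ j ≤ N, s (j + 1) ⊆ s j := by
  by_contra! hgrow
  have hlen : ∀ j ≤ N + 1, j ≤ (s j).card := by
    intro j hj
    induction j with
    | zero => exact Nat.zero_le _
    | succ j ih =>
      have := Finset.card_lt_card ((hs j).ssubset_of_not_subset (hgrow j (by omega)))
      have := ih (by omega)
      omega
  have := hlen (N + 1) le_rfl
  have := hcard (N + 1)
  omega

theorem List.subset_iterate {β : Type*} {F : List β → List β} (hinfl : ∀ R, R ⊆ F R)
    (l : List β) (i : ℕ) : l ⊆ F^[i] l := by
  induction i with
  | zero => exact List.Subset.refl l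
  | succ i ih => exact List.Subset.trans ih (by rw [iterate_succ_apply']; exact hinfl _)

theorem List.iterate_closed_of_subset_finset {β : Type*} [DecidableEq β]
    {F : List β → List β} (hinfl : ∀ R, R ⊆ F R) (hmono : ∀ R R', R ⊆ R' → F R ⊆ F R')
    (l : List β) {U : Finset β} (hU : ∀ i, ∀ x ∈ F^[i] l, x ∈ U) {N : ℕ} (hN : U.card ≤ N) :
    F (F^[N] l) ⊆ F^[N] l := by
  obtain ⟨j, hjN, hj⟩ := Finset.exists_succ_subset_of_card_le
    (s := fun i => (F^[i] l).toFinset) (N := N)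
    (fun i x hx => by
      rw [List.mem_toFinset, iterate_succ_apply'] at *
      exact hinfl _ hx)
    (fun i => (Finset.card_le_card fun x hx => hU i x (List.mem_toFinset.1 hx)).trans hN)
  have hstable : ∀ k ≥ j, F^[k + 1] l ⊆ F^[k] l := by
    intro k hk
    induction k, hk using Nat.le_induction with
    | base => exact fun x hx => List.mem_toFinset.1 (hj (List.mem_toFinset.2 hx))
    | succ k _ ih =>
      simpa only [iterate_succ_apply'] using hmono _ _ ih
  rw [← iterate_succ_apply' F]
  exact hstable N hjN

theorem Nat.ofDigits_ofFn_val {k n : ℕ} (f : Fin n → Fin k) :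
    Nat.ofDigits k (List.ofFn fun i => (f i : ℕ)) = finFunctionFinEquiv f := by
  induction n with
  | zero => simp
  | succ n ih =>
    rw [List.ofFn_succ, Nat.ofDigits_cons, ih, finFunctionFinEquiv_apply,
      finFunctionFinEquiv_apply, Fin.sum_univ_succ, Finset.mul_sum]
    simp only [Fin.val_zero, pow_zero, mul_one, Fin.val_succ, pow_succ]
    congr 1
    exact Finset.sum_congr rfl fun i _ => by ring

theorem List.getD_ofFn {α : Type*} {n i : ℕ} (f : Fin n → α) (d : α) (hi : i < n) :
    (List.ofFn f).getD i d = f ⟨i, hi⟩ := by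
  simp [List.getD_eq_getElem?_getD, hi]

theorem List.ofFn_val_eq_map_range {α : Type*} {n : ℕ} (g : ℕ → α) :
    List.ofFn (fun u : Fin n => g u) = (List.range n).map g :=
  List.ext_getElem (by simp) fun i _ _ => by simp

theorem List.mem_sections_replicate {α : Type*} {a : ℕ} {R ws : List α} :
    ws ∈ (List.replicate a R).sections ↔ ws.length = a ∧ ∀ w ∈ ws, w ∈ R := by
  rw [List.mem_sections]
  induction ws generalizing a with
  | nil => cases a <;> simp
  | cons w ws ih => cases a <;> simp [List.replicate_succ, ih, and_left_comm]

theorem Primrec.nat_ofDigits : Primrec₂ (Nat.ofDigits : ℕ → List ℕ → ℕ) := by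
  have : Primrec fun q : ℕ × List ℕ => q.2.foldr (fun x y => x + q.1 * y) 0 :=
    Primrec.list_foldr Primrec.snd (Primrec.const 0)
      (Primrec.nat_add.comp (Primrec.fst.comp Primrec.snd)
        (Primrec.nat_mul.comp (Primrec.fst.comp Primrec.fst)
          (Primrec.snd.comp Primrec.snd))).to₂
  exact this.of_eq fun q => by simp [Nat.ofDigits_eq_foldr]

theorem Primrec.nat_pow : Primrec₂ ((· ^ ·) : ℕ → ℕ → ℕ) :=
  Primrec₂.unpaired'.1 Nat.Primrec.pow

theorem Primrec.list_all {α β : Type*} [Primcodable α] [Primcodable β] {f : α → List β}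
    {p : α → β → Bool} (hf : Primrec f) (hp : Primrec₂ p) :
    Primrec fun a => (f a).all (p a) := by
  have : Primrec fun a => (f a).foldr (fun b r => p a b && r) true :=
    Primrec.list_foldr hf (Primrec.const true)
      ((Primrec.dom_bool₂ (· && ·)).comp (hp.comp Primrec.fst (Primrec.fst.comp Primrec.snd))
        (Primrec.snd.comp Primrec.snd)).to₂
  refine this.of_eq fun a => ?_
  induction f a with
  | nil => rfl
  | cons b l ih => simp [ih]

theorem Primrec.list_sections_replicate {α : Type*} [Primcodable α] (a : ℕ) :
    Primrec fun R : List α => (List.replicate a R).sections := by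
  induction a with
  | zero => exact Primrec.const [[]]
  | succ a ih =>
    refine (Primrec.list_flatMap ih (Primrec.list_map Primrec.fst
      (Primrec.list_cons.comp Primrec.snd (Primrec.snd.comp Primrec.fst)).to₂).to₂).of_eq
      fun R => ?_
    simp [List.replicate_succ, List.sections]

theorem Primrec.list_flatMap_const {ι α β : Type*} [Primcodable α] [Primcodable β]
    (cs : List ι) {F : ι → α → List β} (hF : ∀ c, Primrec (F c)) :
    Primrec fun a => cs.flatMap fun c => F c a := by
  induction cs with
  | nil => exact Primrec.const []
  | cons c cs ih => exact (Primrec.list_append.comp (hF c) ih).of_eq fun a => by simp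

namespace Fml

def rename (ρ : ℕ → ℕ) : Fml C ar → Fml C ar
  | var n => var (ρ n)
  | app c f => app c fun i => (f i).rename ρ

end Fml

namespace Mat

theorem eval_rename (M : Mat C ar) (I : ℕ → M.V) (ρ : ℕ → ℕ) (A : Fml C ar) :
    M.eval I (A.rename ρ) = M.eval (I ∘ ρ) A := by
  induction A with
  | var n => rfl
  | app c f ih => simp only [Fml.rename, Mat.eval, ih]

def witness (M N : Mat C ar) : Mat C ar where
  V := ((N.V → M.V) → M.V) × N.V
  desig := {p | (∀ t, p.1 t ∈ M.desig) → p.2 ∈ N.desig}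
  interp c ps := (fun t => M.interp c fun i => (ps i).1 t, N.interp c fun i => (ps i).2)

def genericVal (M N : Mat C ar) (σ : ℕ → N.V) : ℕ → (M.witness N).V :=
  fun n => (fun t => t (σ n), σ n)

theorem eval_witness_genericVal (M N : Mat C ar) (σ : ℕ → N.V) (A : Fml C ar) :
    (M.witness N).eval (M.genericVal N σ) A = (fun t => M.eval (t ∘ σ) A, N.eval σ A) := by
  induction A with
  | var n => rfl
  | app c f ih => simp only [Mat.eval, ih]; rfl

theorem taut_subset_iff_forall_eval_witness_mem (M N : Mat C ar) {σ : ℕ → N.V}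
    (hσ : Surjective σ) :
    M.Taut ⊆ N.Taut ↔
      ∀ A, (M.witness N).eval (M.genericVal N σ) A ∈ (M.witness N).desig := by
  obtain ⟨ι, hι⟩ := hσ.hasRightInverse
  simp only [eval_witness_genericVal]
  constructor
  · intro hsub A hA
    have hA' : A.rename (ι ∘ σ) ∈ M.Taut := fun I => by
      rw [eval_rename]
      exact hA (I ∘ ι)
    have := hsub hA' σ
    rwa [eval_rename, ← comp_assoc, hι.comp_eq_id, id_comp] at this
  · intro h A hA I
    have := h (A.rename (ι ∘ I)) fun t => by
      simp only [eval_rename]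
      exact hA _
    rwa [eval_rename, ← comp_assoc, hι.comp_eq_id, id_comp] at this

end Mat

structure FinMat (C : Type) (ar : C → ℕ) where
  m : ℕ
  des : Fin (m + 1) → Bool
  intp : (c : C) → (Fin (ar c) → Fin (m + 1)) → Fin (m + 1)

namespace FinMat

def toMat (P : FinMat C ar) : Mat C ar := ⟨Fin (P.m + 1), {v | P.des v = true}, P.intp⟩

noncomputable def code [Fintype C] [Encodable C] (P : FinMat C ar) : ℕ :=
  encMat P.m P.des P.intp

end FinMat

namespace MatCode

open Encodable

def card (e : ℕ) : ℕ := e.unpair.1 + 1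

def desig (e : ℕ) : List Bool := (decode (α := List Bool) e.unpair.2.unpair.1).getD []

def table (e k : ℕ) : List ℕ :=
  (decode (α := List ℕ) (((decode (α := List ℕ) e.unpair.2.unpair.2).getD []).foldr
    (fun p r => if p.unpair.1 = k then p.unpair.2 else r) 0)).getD []

theorem foldr_lookup_encode {β : Type*} [Encodable β] (G : β → ℕ) {l : List β} {b : β}
    (hb : b ∈ l) :
    (l.map fun b' => Nat.pair (encode b') (G b')).foldr
      (fun p r => if p.unpair.1 = encode b then p.unpair.2 else r) 0 = G b := by
  induction l with
  | nil => simp at hb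
  | cons b' l ih =>
    simp only [List.map_cons, List.foldr_cons, Nat.unpair_pair]
    split_ifs with h
    · rw [encode_injective h]
    · exact ih ((List.mem_cons.1 hb).resolve_left fun hbb => h (hbb ▸ rfl))

theorem primrec_card : Primrec card :=
  Primrec.succ.comp (Primrec.fst.comp Primrec.unpair)

theorem primrec_desig : Primrec desig :=
  Primrec.option_getD.comp
    (Primrec.decode.comp (Primrec.fst.comp (Primrec.unpair.comp
      (Primrec.snd.comp Primrec.unpair))))
    (Primrec.const [])

theorem primrec_table : Primrec₂ table := by
  have hlookup : Primrec₂ fun (k : ℕ) (pr : ℕ × ℕ) =>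
      if pr.1.unpair.1 = k then pr.1.unpair.2 else pr.2 :=
    (Primrec.ite (Primrec.eq.comp
        (Primrec.fst.comp (Primrec.unpair.comp (Primrec.fst.comp Primrec.snd))) Primrec.fst)
      (Primrec.snd.comp (Primrec.unpair.comp (Primrec.fst.comp Primrec.snd)))
      (Primrec.snd.comp Primrec.snd)).to₂
  have hentries : Primrec fun e : ℕ =>
      (decode (α := List ℕ) e.unpair.2.unpair.2).getD [] :=
    Primrec.option_getD.comp
      (Primrec.decode.comp (Primrec.snd.comp (Primrec.unpair.comp
        (Primrec.snd.comp Primrec.unpair))))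
      (Primrec.const [])
  exact (Primrec.option_getD.comp (Primrec.decode.comp
    (Primrec.list_foldr (hentries.comp Primrec.fst) (Primrec.const 0)
      (hlookup.comp (Primrec.snd.comp Primrec.fst) Primrec.snd).to₂))
    (Primrec.const [])).to₂

variable [Fintype C] [Encodable C] (P : FinMat C ar)

@[simp] theorem card_code : card P.code = P.m + 1 := by
  simp [card, FinMat.code, encMat]

@[simp] theorem desig_code : desig P.code = List.ofFn P.des := by
  simp [desig, FinMat.code, encMat, encDes, encodek]

theorem table_code (c : C) :
    table P.code (encode c) =
      List.ofFn fun j => (P.intp c (finFunctionFinEquiv.symm j) : ℕ) := by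
  simp only [table, FinMat.code, encMat, encInterp, Nat.unpair_pair, encodek, Option.getD_some]
  rw [foldr_lookup_encode _ (Finset.mem_toList.2 (Finset.mem_univ c)), encodek, Option.getD_some]
  congr! with j i

theorem getD_table_code (c : C) (args : Fin (ar c) → Fin (P.m + 1)) :
    (table P.code (encode c)).getD (Nat.ofDigits (P.m + 1) (List.ofFn fun i => (args i : ℕ))) 0
      = P.intp c args := by
  rw [table_code, Nat.ofDigits_ofFn_val, List.getD_ofFn _ _ (finFunctionFinEquiv args).isLt,
    Fin.eta, Equiv.symm_apply_apply]

end MatCode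

namespace TautCode

open Encodable MatCode

/-! An element `(p, v)` of `M₁.witness M₂`, where `Mᵢ` has `kᵢ` values, is coded by `(l, v)`
with `l` the list of values of `p` at all valuations `t : Fin k₂ → Fin k₁`, in the order of
`finFunctionFinEquiv`. Truth tables are indexed in the same order, which is why `op` looks up an
argument tuple at its base-`k` value `Nat.ofDigits k`. -/

def numValuations (e : ℕ × ℕ) : ℕ := card e.1 ^ card e.2

def numWitnesses (e : ℕ × ℕ) : ℕ := card e.1 ^ numValuations e * card e.2

def gens (e : ℕ × ℕ) : List (List ℕ × ℕ) :=
  (List.range (card e.2)).map fun v =>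
    ((List.range (numValuations e)).map fun u => u / card e.1 ^ v % card e.1, v)

def op (e : ℕ × ℕ) (k : ℕ) (ws : List (List ℕ × ℕ)) : List ℕ × ℕ :=
  ((List.range (numValuations e)).map fun u =>
      (table e.1 k).getD (Nat.ofDigits (card e.1) (ws.map fun w => w.1.getD u 0)) 0,
    (table e.2 k).getD (Nat.ofDigits (card e.2) (ws.map Prod.snd)) 0)

noncomputable def step (ar : C → ℕ) [Fintype C] [Encodable C] (e : ℕ × ℕ)
    (R : List (List ℕ × ℕ)) : List (List ℕ × ℕ) :=
  R ++ (Finset.univ : Finset C).toList.flatMap fun c =>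
    (List.replicate (ar c) R).sections.map (op e (encode c))

noncomputable def run (ar : C → ℕ) [Fintype C] [Encodable C] (e : ℕ × ℕ) :
    List (List ℕ × ℕ) :=
  (step ar e)^[numWitnesses e] (gens e)

def isDesig (e : ℕ × ℕ) (x : List ℕ × ℕ) : Bool :=
  !(x.1.all fun v => (desig e.1).getD v false) || (desig e.2).getD x.2 false

noncomputable def answer (ar : C → ℕ) [Fintype C] [Encodable C] (n : ℕ) : Bool :=
  (run ar n.unpair).all (isDesig n.unpair)

theorem primrec_numValuations : Primrec numValuations :=
  Primrec.nat_pow.comp (primrec_card.comp Primrec.fst) (primrec_card.comp Primrec.snd)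

theorem primrec_numWitnesses : Primrec numWitnesses :=
  Primrec.nat_mul.comp
    (Primrec.nat_pow.comp (primrec_card.comp Primrec.fst) primrec_numValuations)
    (primrec_card.comp Primrec.snd)

theorem primrec_digit : Primrec fun q : ℕ × ℕ × ℕ => q.2.1 / q.1 ^ q.2.2 % q.1 :=
  Primrec.nat_mod.comp
    (Primrec.nat_div.comp (Primrec.fst.comp Primrec.snd)
      (Primrec.nat_pow.comp Primrec.fst (Primrec.snd.comp Primrec.snd)))
    Primrec.fst

theorem primrec_gens : Primrec gens := by
  have hdigits : Primrec₂ fun (q : (ℕ × ℕ) × ℕ) (u : ℕ) => u / card q.1.1 ^ q.2 % card q.1.1 :=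
    (primrec_digit.comp (Primrec.pair (primrec_card.comp
      (Primrec.fst.comp (Primrec.fst.comp Primrec.fst)))
      (Primrec.pair Primrec.snd (Primrec.snd.comp Primrec.fst)))).to₂
  exact Primrec.list_map (Primrec.list_range.comp (primrec_card.comp Primrec.snd))
    (Primrec.pair (Primrec.list_map
      (Primrec.list_range.comp (primrec_numValuations.comp Primrec.fst)) hdigits)
      Primrec.snd).to₂

theorem primrec_op (k : ℕ) : Primrec₂ fun e ws => op e k ws := by
  have hfst : Primrec₂ fun (q : (ℕ × ℕ) × List (List ℕ × ℕ)) (u : ℕ) =>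
      (table q.1.1 k).getD (Nat.ofDigits (card q.1.1) (q.2.map fun w => w.1.getD u 0)) 0 :=
    ((Primrec.list_getD 0).comp
      (primrec_table.comp (Primrec.fst.comp (Primrec.fst.comp Primrec.fst)) (Primrec.const k))
      (Primrec.nat_ofDigits.comp (primrec_card.comp (Primrec.fst.comp (Primrec.fst.comp
        Primrec.fst)))
        (Primrec.list_map (Primrec.snd.comp Primrec.fst)
          ((Primrec.list_getD 0).comp (Primrec.fst.comp Primrec.snd)
            (Primrec.snd.comp Primrec.fst)).to₂))).to₂
  have hsnd : Primrec fun (q : (ℕ × ℕ) × List (List ℕ × ℕ)) =>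
      (table q.1.2 k).getD (Nat.ofDigits (card q.1.2) (q.2.map Prod.snd)) 0 :=
    (Primrec.list_getD 0).comp
      (primrec_table.comp (Primrec.snd.comp Primrec.fst) (Primrec.const k))
      (Primrec.nat_ofDigits.comp (primrec_card.comp (Primrec.snd.comp Primrec.fst))
        (Primrec.list_map Primrec.snd (Primrec.snd.comp Primrec.snd).to₂))
  exact (Primrec.pair (Primrec.list_map
    (Primrec.list_range.comp (primrec_numValuations.comp Primrec.fst)) hfst) hsnd).to₂

theorem primrec_step (ar : C → ℕ) [Fintype C] [Encodable C] : Primrec₂ (step ar) :=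
  (Primrec.list_append.comp Primrec.snd
    (Primrec.list_flatMap_const _ fun c =>
      Primrec.list_map ((Primrec.list_sections_replicate (ar c)).comp Primrec.snd)
        ((primrec_op (encode c)).comp (Primrec.fst.comp Primrec.fst) Primrec.snd).to₂)).to₂

theorem primrec_run (ar : C → ℕ) [Fintype C] [Encodable C] : Primrec (run ar) :=
  Primrec.nat_iterate primrec_numWitnesses primrec_gens (primrec_step ar)

theorem primrec_isDesig : Primrec₂ isDesig :=
  ((Primrec.dom_bool₂ fun a b => !a || b).comp
    (Primrec.list_all (Primrec.fst.comp Primrec.snd)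
      ((Primrec.list_getD false).comp
        (primrec_desig.comp (Primrec.fst.comp (Primrec.fst.comp Primrec.fst))) Primrec.snd).to₂)
    ((Primrec.list_getD false).comp (primrec_desig.comp (Primrec.snd.comp Primrec.fst))
      (Primrec.snd.comp Primrec.snd))).to₂

theorem primrec_answer (ar : C → ℕ) [Fintype C] [Encodable C] : Primrec (answer ar) :=
  Primrec.list_all ((primrec_run ar).comp Primrec.unpair)
    (primrec_isDesig.comp (Primrec.unpair.comp Primrec.fst) Primrec.snd).to₂

section Step

variable [Fintype C] [Encodable C] {e : ℕ × ℕ}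

theorem mem_step {R : List (List ℕ × ℕ)} {x : List ℕ × ℕ} :
    x ∈ step ar e R ↔
      x ∈ R ∨ ∃ c : C, ∃ ws, (ws.length = ar c ∧ ∀ w ∈ ws, w ∈ R) ∧ op e (encode c) ws = x := by
  simp [step, List.mem_sections_replicate]

theorem subset_step (R : List (List ℕ × ℕ)) : R ⊆ step ar e R :=
  List.subset_append_left _ _

theorem step_mono {R R' : List (List ℕ × ℕ)} (h : R ⊆ R') : step ar e R ⊆ step ar e R' := by
  intro x hx
  rcases mem_step.1 hx with hx | ⟨c, ws, ⟨hlen, hws⟩, rfl⟩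
  · exact subset_step R' (h hx)
  · exact mem_step.2 (Or.inr ⟨c, ws, ⟨hlen, fun w hw => h (hws w hw)⟩, rfl⟩)

end Step

section Correctness

variable [Fintype C] [Encodable C] (P₁ P₂ : FinMat C ar)

local notation "e₀" => (FinMat.code P₁, FinMat.code P₂)
local notation "W" => P₁.toMat.witness P₂.toMat
local notation "ν" => P₁.toMat.genericVal P₂.toMat (Fin.ofNat (P₂.m + 1))

def witnessCode (p : ((Fin (P₂.m + 1) → Fin (P₁.m + 1)) → Fin (P₁.m + 1)) × Fin (P₂.m + 1)) :
    List ℕ × ℕ :=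
  (List.ofFn fun u => (p.1 (finFunctionFinEquiv.symm u) : ℕ), p.2)

theorem witnessCode_gen (v : Fin (P₂.m + 1)) :
    witnessCode P₁ P₂ (fun t => t v, v) =
      ((List.range (numValuations e₀)).map fun u => u / card P₁.code ^ (v : ℕ) % card P₁.code,
        (v : ℕ)) := by
  simp only [witnessCode, finFunctionFinEquiv_symm_apply_val, card_code, numValuations]
  rw [List.ofFn_val_eq_map_range (fun u => u / (P₁.m + 1) ^ (v : ℕ) % (P₁.m + 1))]

theorem mem_gens_code {x : List ℕ × ℕ} :
    x ∈ gens e₀ ↔ ∃ v, witnessCode P₁ P₂ (fun t => t v, v) = x := by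
  simp only [gens, card_code]
  rw [← List.ofFn_val_eq_map_range, List.mem_ofFn]
  simp only [witnessCode_gen, card_code]

theorem op_witnessCode (c : C) (ps : Fin (ar c) → (W).V) :
    op e₀ (encode c) (List.ofFn fun i => witnessCode P₁ P₂ (ps i)) =
      witnessCode P₁ P₂ ((W).interp c ps) := by
  simp only [op, witnessCode, List.map_ofFn, Function.comp_def, card_code, numValuations]
  refine Prod.ext ?_ (getD_table_code P₂ c _)
  dsimp only
  rw [← List.ofFn_val_eq_map_range]
  refine congrArg List.ofFn (funext fun u => ?_)
  simp only [List.getD_ofFn _ _ u.isLt]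
  exact getD_table_code P₁ c _

theorem isDesig_witnessCode (p : (W).V) :
    isDesig e₀ (witnessCode P₁ P₂ p) = true ↔ p ∈ (W).desig := by
  have hall : ((witnessCode P₁ P₂ p).1.all fun v => (List.ofFn P₁.des).getD v false) = true ↔
      ∀ t : Fin (P₂.m + 1) → Fin (P₁.m + 1), P₁.des (p.1 t) = true := by
    simp only [witnessCode, List.all_eq_true, List.mem_ofFn, forall_exists_index,
      forall_apply_eq_imp_iff, List.getD_ofFn _ _ (Fin.isLt _), Fin.eta]
    exact (finFunctionFinEquiv.symm.surjective.forall
      (p := fun t => P₁.des (p.1 t) = true)).symm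
  have hdes : (List.ofFn P₂.des).getD (witnessCode P₁ P₂ p).2 false = P₂.des p.2 :=
    List.getD_ofFn _ _ p.2.isLt
  rw [isDesig, desig_code, desig_code, hdes, Bool.or_eq_true, Bool.not_eq_true', ← Bool.not_eq_true,
    hall, ← imp_iff_not_or]
  rfl

theorem card_image_witnessCode_le :
    (Finset.univ.image (witnessCode P₁ P₂)).card ≤ numWitnesses e₀ :=
  Finset.card_image_le.trans (by simp [numWitnesses, numValuations])

theorem exists_eval_of_mem_iterate (i : ℕ) {x : List ℕ × ℕ}
    (hx : x ∈ (step ar e₀)^[i] (gens e₀)) :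
    ∃ A : Fml C ar, witnessCode P₁ P₂ ((W).eval ν A) = x := by
  induction i generalizing x with
  | zero =>
    obtain ⟨v, rfl⟩ := (mem_gens_code P₁ P₂).1 hx
    exact ⟨.var v, by simp [Mat.eval, Mat.genericVal, FinMat.toMat]⟩
  | succ i ih =>
    rw [iterate_succ_apply'] at hx
    rcases mem_step.1 hx with hx | ⟨c, ws, ⟨hlen, hws⟩, rfl⟩
    · exact ih hx
    · choose A hA using fun j : Fin (ar c) => ih (hws _ (List.get_mem ws (j.cast hlen.symm)))
      refine ⟨.app c A, ?_⟩
      have hws_eq : ws = List.ofFn fun j => witnessCode P₁ P₂ ((W).eval ν (A j)) :=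
        List.ext_getElem (by simp [hlen]) fun j _ _ => by simp [hA]
      rw [hws_eq, op_witnessCode]
      rfl

theorem witnessCode_eval_mem_run (A : Fml C ar) :
    witnessCode P₁ P₂ ((W).eval ν A) ∈ run ar e₀ := by
  -- Every iterate consists of codes of witness values, so `numWitnesses` rounds saturate.
  have hclosed : step ar e₀ (run ar e₀) ⊆ run ar e₀ :=
    List.iterate_closed_of_subset_finset (fun R => subset_step R) (fun _ _ => step_mono) _
      (fun i x hx => by
        obtain ⟨A, rfl⟩ := exists_eval_of_mem_iterate P₁ P₂ i hx
        exact Finset.mem_image_of_mem _ (Finset.mem_univ _))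
      (card_image_witnessCode_le P₁ P₂)
  induction A with
  | var n =>
    exact List.subset_iterate (fun R => subset_step R) _ _
      ((mem_gens_code P₁ P₂).2 ⟨Fin.ofNat _ n, rfl⟩)
  | app c A ih =>
    refine hclosed (mem_step.2 (Or.inr
      ⟨c, List.ofFn fun i => witnessCode P₁ P₂ ((W).eval ν (A i)), ⟨List.length_ofFn, ?_⟩,
        op_witnessCode P₁ P₂ c _⟩))
    simpa [List.mem_ofFn] using ih

theorem answer_iff :
    answer ar (Nat.pair P₁.code P₂.code) = true ↔ P₁.toMat.Taut ⊆ P₂.toMat.Taut := by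
  have hσ : Surjective (Fin.ofNat (P₂.m + 1)) := fun v => ⟨v, Fin.ofNat_val_eq_self v⟩
  rw [answer, Nat.unpair_pair, List.all_eq_true,
    Mat.taut_subset_iff_forall_eval_witness_mem _ _ hσ]
  constructor
  · exact fun h A => (isDesig_witnessCode P₁ P₂ _).1 (h _ (witnessCode_eval_mem_run P₁ P₂ A))
  · intro h x hx
    obtain ⟨A, rfl⟩ := exists_eval_of_mem_iterate P₁ P₂ _ hx
    exact (isDesig_witnessCode P₁ P₂ _).2 (h A)

end Correctness

end TautCode

theorem decidable_taut_subset_general [Fintype C] [Encodable C] :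
    ∃ f g h : ℕ → Bool, Computable f ∧ Computable g ∧ Computable h ∧
      ∀ (m₁ m₂ : ℕ) (des₁ : Fin (m₁ + 1) → Bool) (des₂ : Fin (m₂ + 1) → Bool)
        (intp₁ : (c : C) → (Fin (ar c) → Fin (m₁ + 1)) → Fin (m₁ + 1))
        (intp₂ : (c : C) → (Fin (ar c) → Fin (m₂ + 1)) → Fin (m₂ + 1)),
        (f (Nat.pair (encMat m₁ des₁ intp₁) (encMat m₂ des₂ intp₂)) = true ↔
          (Mat.mk (Fin (m₁ + 1)) {v | des₁ v = true} intp₁).Taut ⊆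
            (Mat.mk (Fin (m₂ + 1)) {v | des₂ v = true} intp₂).Taut) ∧
        (g (Nat.pair (encMat m₁ des₁ intp₁) (encMat m₂ des₂ intp₂)) = true ↔
          (Mat.mk (Fin (m₁ + 1)) {v | des₁ v = true} intp₁).Taut =
            (Mat.mk (Fin (m₂ + 1)) {v | des₂ v = true} intp₂).Taut) ∧
        (h (Nat.pair (encMat m₁ des₁ intp₁) (encMat m₂ des₂ intp₂)) = true ↔
          (Mat.mk (Fin (m₁ + 1)) {v | des₁ v = true} intp₁).Taut ⊂
            (Mat.mk (Fin (m₂ + 1)) {v | des₂ v = true} intp₂).Taut) := by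
  have hswap : Primrec fun n : ℕ => Nat.pair n.unpair.2 n.unpair.1 :=
    Primrec₂.natPair.comp (Primrec.snd.comp Primrec.unpair) (Primrec.fst.comp Primrec.unpair)
  have hans := TautCode.primrec_answer ar
  refine ⟨TautCode.answer ar,
    fun n => TautCode.answer ar n && TautCode.answer ar (Nat.pair n.unpair.2 n.unpair.1),
    fun n => TautCode.answer ar n && !TautCode.answer ar (Nat.pair n.unpair.2 n.unpair.1),
    hans.to_comp,
    ((Primrec.dom_bool₂ (· && ·)).comp hans (hans.comp hswap)).to_comp,
    ((Primrec.dom_bool₂ fun a b => a && !b).comp hans (hans.comp hswap)).to_comp,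
    fun m₁ m₂ des₁ des₂ intp₁ intp₂ => ?_⟩
  have h₁₂ := TautCode.answer_iff ⟨m₁, des₁, intp₁⟩ ⟨m₂, des₂, intp₂⟩
  have h₂₁ := TautCode.answer_iff ⟨m₂, des₂, intp₂⟩ ⟨m₁, des₁, intp₁⟩
  simp only [FinMat.code, FinMat.toMat] at h₁₂ h₂₁
  simp only [Nat.unpair_pair, Bool.and_eq_true, Bool.not_eq_true', ← Bool.not_eq_true, h₁₂, h₂₁,
    Set.Subset.antisymm_iff, ssubset_iff_subset_not_subset, and_self]

/-- Theorem 4.2 and Corollary 4.3: given two finite-valued matrices (presented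
by their codes), it is decidable whether `Taut(M₁) ⊆ Taut(M₂)`, whether
`Taut(M₁) = Taut(M₂)`, and whether `M₁` is better than `M₂`
(`Taut(M₁) ⊊ Taut(M₂)`). -/
theorem decidable_taut_subset [Fintype C] [DecidableEq C] [Encodable C] :
    ∃ f g h : ℕ → Bool, Computable f ∧ Computable g ∧ Computable h ∧
      ∀ (m₁ m₂ : ℕ) (des₁ : Fin (m₁ + 1) → Bool) (des₂ : Fin (m₂ + 1) → Bool)
        (intp₁ : (c : C) → (Fin (ar c) → Fin (m₁ + 1)) → Fin (m₁ + 1))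
        (intp₂ : (c : C) → (Fin (ar c) → Fin (m₂ + 1)) → Fin (m₂ + 1)),
        (f (Nat.pair (encMat m₁ des₁ intp₁) (encMat m₂ des₂ intp₂)) = true ↔
          (Mat.mk (Fin (m₁ + 1)) {v | des₁ v = true} intp₁).Taut ⊆
            (Mat.mk (Fin (m₂ + 1)) {v | des₂ v = true} intp₂).Taut) ∧
        (g (Nat.pair (encMat m₁ des₁ intp₁) (encMat m₂ des₂ intp₂)) = true ↔
          (Mat.mk (Fin (m₁ + 1)) {v | des₁ v = true} intp₁).Taut =
            (Mat.mk (Fin (m₂ + 1)) {v | des₂ v = true} intp₂).Taut) ∧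
        (h (Nat.pair (encMat m₁ des₁ intp₁) (encMat m₂ des₂ intp₂)) = true ↔
          (Mat.mk (Fin (m₁ + 1)) {v | des₁ v = true} intp₁).Taut ⊂
            (Mat.mk (Fin (m₂ + 1)) {v | des₂ v = true} intp₂).Taut) :=
  decidable_taut_subset_general
end

section
/- Let C be a Hilbert calculus whose set of theorems Thm(C) is computably enumerable, and suppose there is a sequence (Mᵢ) of finite-valued matrices, given by a recursive procedure (so that the relation {(i, A) : Mᵢ ⊨ A} is decidable), such that Thm(C) = ⋂ᵢ Taut(Mᵢ). Then Thm(C) is decidable. Equivalently, if C is undecidable then C has no sequential approximation. -/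
variable {C : Type} {ar : C → ℕ}

/-- A concrete numerical encoding of formulas. -/
def encF [Encodable C] : Fml C ar → ℕ
  | .var n => Nat.pair 0 n
  | .app c f =>
      Nat.pair 1 (Nat.pair (Encodable.encode c)
        (Encodable.encode (List.ofFn fun i => encF (f i))))

theorem Primrec.of_eventually_const {σ : Type*} [Primcodable σ] {f : ℕ → σ} {N : ℕ} {d : σ}
    (h : ∀ m, N ≤ m → f m = d) : Primrec f := by
  refine ((Primrec.list_getD d).comp (Primrec.const ((List.range N).map f)) Primrec.id).of_eq
    fun m => ?_
  rcases lt_or_ge m N with hm | hm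
  · simp [hm]
  · simp [hm, h m hm]

theorem REPred.exists_of_computable₂ {α : Type*} [Primcodable α] {q : α → ℕ → Bool}
    (hq : Computable₂ q) : REPred fun a => ∃ n, q a n = true :=
  (Partrec.rfind hq.partrec₂).dom_re.of_eq fun a => by simp [Nat.rfind_dom]

theorem exists_computable_iff_of_re_of_re_compl {α : Type*} {enc : α → ℕ} {p : α → Prop}
    (hrange : ComputablePred (· ∈ Set.range enc)) {e d : ℕ → Bool}
    (he : Computable e) (hd : Computable d)
    (hp : ∀ a, p a ↔ ∃ n, e (Nat.pair n (enc a)) = true)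
    (hnp : ∀ a, ¬p a ↔ ∃ n, d (Nat.pair n (enc a)) = true) :
    ∃ f : ℕ → Bool, Computable f ∧ ∀ a, f (enc a) = true ↔ p a := by
  obtain ⟨isCode, hcode, hrange⟩ := ComputablePred.computable_iff.1 hrange
  have hmem (x : ℕ) : x ∈ Set.range enc ↔ isCode x = true := Iff.of_eq (congrFun hrange x)
  have hpair : Computable₂ fun (x n : ℕ) => Nat.pair n x :=
    Primrec₂.natPair.to_comp.comp Computable.snd Computable.fst
  let P (x : ℕ) : Prop := ∃ n, (isCode x && e (Nat.pair n x)) = true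
  have hP : REPred P := REPred.exists_of_computable₂ <|
    Primrec.and.to_comp.comp (hcode.comp Computable.fst) (he.comp hpair)
  have hnotP : REPred fun x => ¬P x := by
    refine (REPred.exists_of_computable₂ (q := fun x n => !isCode x || d (Nat.pair n x)) <|
      Primrec.or.to_comp.comp (Primrec.not.to_comp.comp (hcode.comp Computable.fst))
        (hd.comp hpair)).of_eq fun x => ?_
    by_cases hx : isCode x
    · obtain ⟨a, rfl⟩ := (hmem x).2 hx
      simp [P, hx, ← hp, hnp]
    · simp [P, hx]
  obtain ⟨_, hf⟩ := ComputablePred.computable_iff_re_compl_re'.2 ⟨hP, hnotP⟩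
  refine ⟨fun x => decide (P x), hf, fun a => ?_⟩
  simp [P, (hmem _).1 ⟨a, rfl⟩, hp]

theorem List.lt_encode_of_mem {l : List ℕ} {m : ℕ} (h : m ∈ l) : m < Encodable.encode l := by
  induction l with
  | nil => cases h
  | cons a l ih =>
    rw [Encodable.encode_list_cons, Encodable.encode_nat, Nat.lt_succ_iff]
    rcases List.mem_cons.1 h with rfl | h
    · exact Nat.left_le_pair _ _
    · exact (ih h).le.trans (Nat.right_le_pair _ _)

theorem List.exists_ofFn_eq_of_forall_mem_range {α β : Type*} {g : α → β} {l : List β} {n : ℕ}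
    (hn : l.length = n) (h : ∀ b ∈ l, b ∈ Set.range g) :
    ∃ B : Fin n → α, List.ofFn (fun i => g (B i)) = l := by
  subst hn
  choose B hB using fun i : Fin l.length => h l[i] (List.getElem_mem i.2)
  exact ⟨B, by simp [hB]⟩

def childCodes (x : ℕ) : List ℕ := Denumerable.ofNat (List ℕ) x.unpair.2.unpair.2

theorem lt_of_mem_childCodes {x m : ℕ} (h : m ∈ childCodes x) : m < x := by
  refine (List.lt_encode_of_mem h).trans_le ?_
  rw [childCodes, Denumerable.encode_ofNat]
  exact (Nat.unpair_right_le _).trans (Nat.unpair_right_le _)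

def fmlCodeStep (arity : ℕ → Option ℕ) (x : ℕ) (bs : List Bool) : Bool :=
  decide (x.unpair.1 = 0 ∨
    x.unpair.1 = 1 ∧ arity x.unpair.2.unpair.1 = some bs.length ∧ ∀ b ∈ bs, b = true)

/-- Recognises the codes `encF` produces when connective codes have arities given by `arity`:
`pair 0 n`, or `pair 1 (pair c (encode l))` with `arity c = some l.length` and every entry of
`l` again a code. -/
def isFmlCode (arity : ℕ → Option ℕ) (x : ℕ) : Bool :=
  fmlCodeStep arity x ((childCodes x).attach.map fun m => isFmlCode arity m.1)
termination_by x
decreasing_by exact lt_of_mem_childCodes m.2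

theorem isFmlCode_eq (arity : ℕ → Option ℕ) (x : ℕ) :
    isFmlCode arity x = fmlCodeStep arity x ((childCodes x).map (isFmlCode arity)) := by
  rw [isFmlCode]
  simp

theorem primrec_fmlCodeStep {arity : ℕ → Option ℕ} (harity : Primrec arity) :
    Primrec₂ (fmlCodeStep arity) := by
  have hkind : Primrec fun p : ℕ × List Bool => p.1.unpair.1 :=
    Primrec.fst.comp (Primrec.unpair.comp Primrec.fst)
  have hconn : Primrec fun p : ℕ × List Bool => p.1.unpair.2.unpair.1 :=
    Primrec.fst.comp (Primrec.unpair.comp (Primrec.snd.comp (Primrec.unpair.comp Primrec.fst)))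
  have hlen : Primrec fun p : ℕ × List Bool => some p.2.length :=
    Primrec.option_some.comp (Primrec.list_length.comp Primrec.snd)
  have hall : PrimrecPred fun p : ℕ × List Bool => ∀ b ∈ p.2, b = true :=
    (PrimrecPred.forall_mem_list (Primrec.eq.comp Primrec.id (Primrec.const true))).comp
      Primrec.snd
  exact PrimrecPred.decide <| .or (Primrec.eq.comp hkind (Primrec.const 0)) <|
    .and (Primrec.eq.comp hkind (Primrec.const 1)) <|
    .and (Primrec.eq.comp (harity.comp hconn) hlen) hall

theorem primrec_isFmlCode {arity : ℕ → Option ℕ} (harity : Primrec arity) :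
    Primrec (isFmlCode arity) :=
  Primrec.nat_omega_rec' _ Primrec.id
    ((Primrec.ofNat (List ℕ)).comp
      (Primrec.snd.comp (Primrec.unpair.comp (Primrec.snd.comp Primrec.unpair))))
    (Primrec.option_some.comp (primrec_fmlCodeStep harity)).to₂
    (fun _ _ => lt_of_mem_childCodes) fun x => by rw [isFmlCode_eq]; rfl

section Encoding

variable [Encodable C]

variable (C ar) in
def arityOfCode (m : ℕ) : Option ℕ := (Encodable.decode₂ C m).map ar

theorem arityOfCode_eq_some {m k : ℕ} :
    arityOfCode C ar m = some k ↔ ∃ c, Encodable.encode c = m ∧ ar c = k := by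
  rw [arityOfCode, Option.map_eq_some_iff]
  simp only [← Option.mem_def, Encodable.mem_decode₂]

@[simp]
theorem arityOfCode_encode (c : C) : arityOfCode C ar (Encodable.encode c) = some (ar c) := by
  simp [arityOfCode]

theorem primrec_arityOfCode [Finite C] : Primrec (arityOfCode C ar) := by
  obtain ⟨N, hN⟩ := (Set.finite_range (Encodable.encode : C → ℕ)).bddAbove
  refine Primrec.of_eventually_const (N := N + 1) (d := none) fun m hm => ?_
  refine Option.eq_none_iff_forall_ne_some.2 fun k hk => ?_
  obtain ⟨c, rfl, -⟩ := arityOfCode_eq_some.1 hk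
  exact absurd (hN ⟨c, rfl⟩) (by omega)

theorem childCodes_encF_app (c : C) (f : Fin (ar c) → Fml C ar) :
    childCodes (encF (.app c f)) = List.ofFn fun i => encF (f i) := by
  simp [childCodes, encF]

theorem isFmlCode_encF (A : Fml C ar) : isFmlCode (arityOfCode C ar) (encF A) = true := by
  induction A with
  | var n =>
    rw [isFmlCode_eq]
    simp [fmlCodeStep, encF]
  | app c f ih =>
    rw [isFmlCode_eq, childCodes_encF_app]
    simp [fmlCodeStep, encF, ih]

theorem exists_encF_eq_of_isFmlCode {x : ℕ} (hx : isFmlCode (arityOfCode C ar) x = true) :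
    ∃ A : Fml C ar, encF A = x := by
  induction x using Nat.strong_induction_on with
  | _ x ih =>
  rw [isFmlCode_eq] at hx
  simp only [fmlCodeStep, decide_eq_true_eq, List.mem_map] at hx
  rcases hx with hvar | ⟨happ, harity, hchildren⟩
  · exact ⟨.var x.unpair.2, by rw [encF, ← hvar, Nat.pair_unpair]⟩
  obtain ⟨c, hc, hlen⟩ := arityOfCode_eq_some.1 harity
  obtain ⟨B, hB⟩ := List.exists_ofFn_eq_of_forall_mem_range (g := @encF C ar _)
    (by simpa using hlen.symm) fun m hm =>
      ih m (lt_of_mem_childCodes hm) (hchildren _ ⟨m, hm, rfl⟩)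
  refine ⟨.app c B, ?_⟩
  rw [encF, hB, childCodes, Denumerable.encode_ofNat, hc, Nat.pair_unpair, ← happ,
    Nat.pair_unpair]

theorem isFmlCode_iff_mem_range {x : ℕ} :
    isFmlCode (arityOfCode C ar) x = true ↔ x ∈ Set.range (encF (C := C) (ar := ar)) :=
  ⟨exists_encF_eq_of_isFmlCode, by rintro ⟨A, rfl⟩; exact isFmlCode_encF A⟩

theorem computablePred_mem_range_encF [Finite C] :
    ComputablePred (· ∈ Set.range (encF (C := C) (ar := ar))) :=
  ComputablePred.computable_iff.2 ⟨_, (primrec_isFmlCode primrec_arityOfCode).to_comp,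
    funext fun _ => propext isFmlCode_iff_mem_range.symm⟩

end Encoding

theorem decidable_of_sequential_approximation_general
    [Fintype C] [Encodable C] (K : Calc C ar)
    (M : ℕ → Mat C ar)
    (henum : ∃ e : ℕ → Bool, Computable e ∧
      ∀ A : Fml C ar, (Thm K A ↔ ∃ n, e (Nat.pair n (encF A)) = true))
    (hdec : ∃ d : ℕ → Bool, Computable d ∧
      ∀ (i : ℕ) (A : Fml C ar), (d (Nat.pair i (encF A)) = true ↔ A ∈ (M i).Taut))
    (hint : {A : Fml C ar | Thm K A} = ⋂ i, (M i).Taut) :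
    ∃ f : ℕ → Bool, Computable f ∧
      ∀ A : Fml C ar, (f (encF A) = true ↔ Thm K A) := by
  obtain ⟨e, he, hThm⟩ := henum
  obtain ⟨d, hd, hTaut⟩ := hdec
  refine exists_computable_iff_of_re_of_re_compl computablePred_mem_range_encF he
    (Primrec.not.to_comp.comp hd) hThm fun A => ?_
  have hThm_iff : Thm K A ↔ ∀ i, d (Nat.pair i (encF A)) = true := by
    rw [show Thm K A ↔ A ∈ {A | Thm K A} from Iff.rfl, hint, Set.mem_iInter]
    simp only [hTaut]
  simp [hThm_iff]

/-- Proposition 5.3 (contrapositive form): if `Thm(C)` is computably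
enumerable and there is a recursively given sequence of finite-valued matrices
(i.e. the relation `{(i, A) : Mᵢ ⊨ A}` is decidable) whose tautologies
intersect to `Thm(C)`, then `Thm(C)` is decidable.  Equivalently, an
undecidable calculus has no sequential approximation. -/
theorem decidable_of_sequential_approximation
    [Fintype C] [DecidableEq C] [Encodable C] (K : Calc C ar)
    (M : ℕ → Mat C ar) (hfin : ∀ i, Finite (M i).V)
    (henum : ∃ e : ℕ → Bool, Computable e ∧
      ∀ A : Fml C ar, (Thm K A ↔ ∃ n, e (Nat.pair n (encF A)) = true))
    (hdec : ∃ d : ℕ → Bool, Computable d ∧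
      ∀ (i : ℕ) (A : Fml C ar), (d (Nat.pair i (encF A)) = true ↔ A ∈ (M i).Taut))
    (hint : {A : Fml C ar | Thm K A} = ⋂ i, (M i).Taut) :
    ∃ f : ℕ → Bool, Computable f ∧
      ∀ A : Fml C ar, (f (encF A) = true ↔ Thm K A) :=
  decidable_of_sequential_approximation_general K M henum hdec hint
end
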